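/- arXiv:1702.04304 — 2 statements merged into one kernel-verified Lean document; each statement's English description precedes it below -/
import Mathlib

section
/- Potential score is antitone under extension: if itineraries I₁ ⊆ I₂ for the same OPMPC instance, then pot(I₂) ≤ pot(I₁), where pot(I) = score(I) + extra(I). -/
noncomputable def topSum (S : Multiset ℝ) (k : ℕ) : ℝ :=
  ((S.sort (· ≤ ·)).reverse.take k).sum

noncomputable def extra {ι K : Type} [DecidableEq ι] [DecidableEq K]
    (P : Finset ι) (Kset : Finset K) (cat : ι → K) (score : ι → ℝ)
    (maxk : K → ℕ) (I : Finset ι) : ℝ :=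
  ∑ k ∈ Kset, topSum (((P \ I).filter (fun p => cat p = k)).val.map score)
      (maxk k - (I.filter (fun p => cat p = k)).card)

noncomputable def pot {ι K : Type} [DecidableEq ι] [DecidableEq K]
    (P : Finset ι) (Kset : Finset K) (cat : ι → K) (score : ι → ℝ)
    (maxk : K → ℕ) (I : Finset ι) : ℝ :=
  (∑ p ∈ I, score p) + extra P Kset cat score maxk I

/-
For nonnegative reals, `topSum S k` (the sum of the `k` largest elements of `S`) is
the largest sum of a sub-multiset of `S` with at most `k` elements. Work category by category.
If `I₁ ⊆ I₂`, the scores of the POIs in `I₂ \ I₁` together with the best `maxk - u(I₂)` scores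
outside `I₂` form a sub-multiset of the scores outside `I₁` with at most `maxk - u(I₁)` elements,
so their total is at most the extra term of `I₁`; now add the score of `I₁` to both sides.
-/

open Finset

theorem Finset.filter_sdiff {α : Type*} [DecidableEq α] (p : α → Prop) [DecidablePred p]
    (s t : Finset α) : (s \ t).filter p = s.filter p \ t.filter p := by
  ext
  simp only [mem_filter, mem_sdiff]
  tauto

theorem Multiset.exists_cons_eq_of_le_cons {α : Type*} {a : α} {S T : Multiset α}
    (hT : T ≤ a ::ₘ S) (hT0 : T ≠ 0) : ∃ c T', T = c ::ₘ T' ∧ T' ≤ S := by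
  by_cases ha : a ∈ T
  · obtain ⟨T', rfl⟩ := exists_cons_of_mem ha
    exact ⟨a, T', rfl, (cons_le_cons_iff a).mp hT⟩
  · obtain ⟨b, hb⟩ := exists_mem_of_ne_zero hT0
    obtain ⟨T', rfl⟩ := exists_cons_of_mem hb
    exact ⟨b, T', rfl, (le_cons_self T' b).trans ((le_cons_of_notMem ha).mp hT)⟩

theorem List.sum_le_sum_take_of_pairwise_ge {α : Type*} [AddCommMonoid α] [LinearOrder α]
    [IsOrderedAddMonoid α] {L : List α} (hL : L.Pairwise (· ≥ ·)) (hL0 : ∀ x ∈ L, 0 ≤ x)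
    {T : Multiset α} (hT : T ≤ ↑L) (k : ℕ) (hk : T.card ≤ k) : T.sum ≤ (L.take k).sum := by
  induction L generalizing T k with
  | nil => simp [Multiset.le_zero.mp hT]
  | cons a L ih =>
    rcases eq_or_ne T 0 with rfl | hT0
    · simpa using sum_nonneg fun x hx => hL0 x ((take_sublist _ _).mem hx)
    rw [← Multiset.cons_coe] at hT
    -- `T` gives up an element `c ≤ a`, the list gives up its head `a`.
    obtain ⟨c, T', rfl, hT'⟩ := Multiset.exists_cons_eq_of_le_cons hT hT0
    obtain _ | k := k
    · simp at hk
    rw [pairwise_cons] at hL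
    have hca : c ≤ a := by
      rcases Multiset.mem_cons.mp (Multiset.mem_of_le hT (Multiset.mem_cons_self c T')) with
        rfl | hc
      exacts [le_rfl, hL.1 c hc]
    rw [Multiset.sum_cons, take_succ_cons, sum_cons]
    exact add_le_add hca
      (ih hL.2 (fun x hx => hL0 x (mem_cons_of_mem a hx)) hT' k (by simpa using hk))

theorem sum_le_topSum {S T : Multiset ℝ} (hS : ∀ x ∈ S, 0 ≤ x) (hT : T ≤ S) {k : ℕ}
    (hk : T.card ≤ k) : T.sum ≤ topSum S k := by
  refine List.sum_le_sum_take_of_pairwise_ge ?_ (fun x hx => hS x ?_) ?_ k hk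
  · exact List.pairwise_reverse.mpr (Multiset.pairwise_sort S _)
  · simpa using hx
  · simpa using hT

theorem sum_add_topSum_le {U S : Multiset ℝ} (hUS : ∀ x ∈ U + S, 0 ≤ x) {k l : ℕ}
    (hkl : U.card + k ≤ l) : U.sum + topSum S k ≤ topSum (U + S) l := by
  set top : List ℝ := (S.sort (· ≤ ·)).reverse.take k
  have htop : (top : Multiset ℝ) ≤ S := by
    have := Multiset.coe_le.mpr (List.take_sublist k (S.sort (· ≤ ·)).reverse).subperm
    rwa [Multiset.coe_reverse, Multiset.sort_eq] at this
  have hcard : (U + top).card ≤ l := by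
    simp only [Multiset.card_add, Multiset.coe_card]
    have : top.length ≤ k := List.length_take_le k _
    omega
  simpa [top, topSum] using sum_le_topSum hUS (add_le_add_right htop U) hcard

theorem sum_add_topSum_sdiff_le {ι : Type*} [DecidableEq ι] {Q A B : Finset ι}
    (score : ι → ℝ) (hscore : ∀ p ∈ Q, 0 ≤ score p) (hAB : A ⊆ B) (hBQ : B ⊆ Q) {m : ℕ}
    (hBm : #B ≤ m) :
    ∑ p ∈ B, score p + topSum ((Q \ B).val.map score) (m - #B) ≤
      ∑ p ∈ A, score p + topSum ((Q \ A).val.map score) (m - #A) := by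
  have hsplit : (Q \ A).val = (B \ A).val + (Q \ B).val := by
    rw [← sdiff_union_sdiff_cancel hBQ hAB, ← disjUnion_eq_union _ _
      (sdiff_disjoint.mono_right sdiff_subset), add_comm]
    rfl
  have hcard : #(B \ A) + (m - #B) ≤ m - #A := by
    have := card_le_card hAB
    rw [card_sdiff_of_subset hAB]
    omega
  rw [← sum_sdiff hAB, add_comm (∑ p ∈ B \ A, score p), add_assoc]
  gcongr
  rw [hsplit, Multiset.map_add]
  refine sum_add_topSum_le ?_ ?_
  · intro x hx
    rw [← Multiset.map_add, ← hsplit, Multiset.mem_map] at hx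
    obtain ⟨p, hp, rfl⟩ := hx
    exact hscore p (mem_sdiff.mp hp).1
  · rwa [Multiset.card_map]

theorem pot_eq_sum_category {ι K : Type} [DecidableEq ι] [DecidableEq K]
    {P : Finset ι} {Kset : Finset K} {cat : ι → K} (score : ι → ℝ) (maxk : K → ℕ)
    (hcat : ∀ p ∈ P, cat p ∈ Kset) {I : Finset ι} (hIP : I ⊆ P) :
    pot P Kset cat score maxk I = ∑ k ∈ Kset, (∑ p ∈ I.filter (cat · = k), score p +
      topSum ((P.filter (cat · = k) \ I.filter (cat · = k)).val.map score)
        (maxk k - #(I.filter (cat · = k)))) := by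
  rw [pot, extra, ← sum_fiberwise_of_maps_to (fun p hp => hcat p (hIP hp)), ← sum_add_distrib]
  simp only [filter_sdiff]

theorem pot_antitone_general {ι K : Type} [DecidableEq ι] [DecidableEq K]
    (P : Finset ι) (Kset : Finset K) (cat : ι → K) (score : ι → ℝ)
    (maxk : K → ℕ)
    (hscore : ∀ p, 0 ≤ score p)
    (hcat : ∀ p ∈ P, cat p ∈ Kset)
    (I₁ I₂ : Finset ι)
    (hsub : I₁ ⊆ I₂) (hI₂P : I₂ ⊆ P)
    (h₂ : ∀ k, (I₂.filter (fun p => cat p = k)).card ≤ maxk k) :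
    pot P Kset cat score maxk I₂ ≤ pot P Kset cat score maxk I₁ := by
  rw [pot_eq_sum_category score maxk hcat hI₂P,
    pot_eq_sum_category score maxk hcat (hsub.trans hI₂P)]
  exact sum_le_sum fun k _ => sum_add_topSum_sdiff_le score (fun p _ => hscore p)
    (filter_subset_filter _ hsub) (filter_subset_filter _ hI₂P) (h₂ k)

/-- potential score is antitone under extension. -/
theorem pot_antitone {ι K : Type} [DecidableEq ι] [DecidableEq K]
    (P : Finset ι) (Kset : Finset K) (cat : ι → K) (score : ι → ℝ)
    (maxk : K → ℕ)
    (hscore : ∀ p, 0 ≤ score p)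
    (hcat : ∀ p ∈ P, cat p ∈ Kset)
    (I₁ I₂ : Finset ι)
    (hsub : I₁ ⊆ I₂) (hI₂P : I₂ ⊆ P)
    (h₁ : ∀ k, (I₁.filter (fun p => cat p = k)).card ≤ maxk k)
    (h₂ : ∀ k, (I₂.filter (fun p => cat p = k)).card ≤ maxk k) :
    pot P Kset cat score maxk I₂ ≤ pot P Kset cat score maxk I₁ :=
  pot_antitone_general P Kset cat score maxk hscore hcat I₁ I₂ hsub hI₂P h₂
end

section
/- Top-k sum removal inequality: for a finite multiset S of nonnegative reals, an element x ∈ S, and k ≥ 1, it holds that x + topSum(S \ {x}, k - 1) ≤ topSum(S, k) whenever x is among the k largest elements of S; and in general x + topSum(S \ {x}, k - 1) ≤ topSum(S, k) + max(0, x - m) where m is the k-th largest element. In particular, if x ≤ every element counted in topSum(S, k), then x + topSum(S \ {x}, k-1) ≤ topSum(S, k). -/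
/-- The list of elements of `S` in descending order. -/
noncomputable def descList (S : Multiset ℝ) : List ℝ :=
  (S.sort (· ≤ ·)).reverse

theorem List.add_sum_take_le_sum_take_orderedInsert {α : Type*} [AddCommMonoid α] [LinearOrder α]
    [IsOrderedAddMonoid α] (x : α) (l : List α) (k : ℕ) :
    x + (l.take k).sum ≤ ((l.orderedInsert (· ≥ ·) x).take (k + 1)).sum := by
  induction l generalizing k with
  | nil => simp
  | cons a t ih =>
    by_cases hxa : x ≥ a
    · simp [List.orderedInsert_cons, hxa]
    · rw [List.orderedInsert_cons, if_neg hxa]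
      cases k with
      | zero => simpa using (not_le.mp hxa).le
      | succ j =>
        simp only [List.take_succ_cons, List.sum_cons]
        calc x + (a + (t.take j).sum) = a + (x + (t.take j).sum) := add_left_comm _ _ _
          _ ≤ _ := add_le_add_right (ih j) a

theorem descList_cons (x : ℝ) (T : Multiset ℝ) :
    descList (x ::ₘ T) = (descList T).orderedInsert (· ≥ ·) x := by
  have sorted (S : Multiset ℝ) : (descList S).Pairwise (· ≥ ·) :=
    List.pairwise_reverse.mpr (S.pairwise_sort (· ≤ ·))
  refine List.Perm.eq_of_pairwise' (sorted _) ((sorted T).orderedInsert _ _) ?_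
  refine List.Perm.trans ?_ (List.perm_orderedInsert _ _ _).symm
  rw [← Multiset.coe_eq_coe]
  simp [descList, ← Multiset.cons_coe]

theorem add_topSum_le_topSum_cons (x : ℝ) (T : Multiset ℝ) (k : ℕ) :
    x + topSum T k ≤ topSum (x ::ₘ T) (k + 1) := by
  have := List.add_sum_take_le_sum_take_orderedInsert x (descList T) k
  rwa [← descList_cons] at this

theorem add_topSum_erase_le (S : Multiset ℝ) {x : ℝ} (hx : x ∈ S) {k : ℕ} (hk : 1 ≤ k) :
    x + topSum (S.erase x) (k - 1) ≤ topSum S k := by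
  obtain ⟨j, rfl⟩ := Nat.exists_eq_add_of_le' hk
  simpa [Multiset.cons_erase hx] using add_topSum_le_topSum_cons x (S.erase x) j

theorem topSum_erase_general (S : Multiset ℝ) (x : ℝ) (k : ℕ)
    (hx : x ∈ S) (hk : 1 ≤ k) :
    ((x ∈ (descList S).take k) →
      x + topSum (S.erase x) (k - 1) ≤ topSum S k) ∧
    (x + topSum (S.erase x) (k - 1)
      ≤ topSum S k + max 0 (x - (descList S).getD (k - 1) 0)) ∧
    ((∀ y ∈ (descList S).take k, x ≤ y) →
      x + topSum (S.erase x) (k - 1) ≤ topSum S k) := by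
  have h := add_topSum_erase_le S hx hk
  exact ⟨fun _ => h, le_add_of_le_of_nonneg h (le_max_left _ _), fun _ => h⟩

/-- top-k sum removal inequalities. With `m` the `k`-th largest
element of `S` (0 if `k > |S|`):
(a) if `x` is among the `k` largest elements, then
    `x + topSum (S \ {x}) (k-1) ≤ topSum S k`;
(b) in general `x + topSum (S \ {x}) (k-1) ≤ topSum S k + max 0 (x - m)`;
(c) if `x` is at most every element counted in `topSum S k`, then
    `x + topSum (S \ {x}) (k-1) ≤ topSum S k`. -/
theorem topSum_erase (S : Multiset ℝ) (x : ℝ) (k : ℕ)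
    (hnn : ∀ y ∈ S, (0:ℝ) ≤ y)
    (hx : x ∈ S) (hk : 1 ≤ k) :
    ((x ∈ (descList S).take k) →
      x + topSum (S.erase x) (k - 1) ≤ topSum S k) ∧
    (x + topSum (S.erase x) (k - 1)
      ≤ topSum S k + max 0 (x - (descList S).getD (k - 1) 0)) ∧
    ((∀ y ∈ (descList S).take k, x ≤ y) →
      x + topSum (S.erase x) (k - 1) ≤ topSum S k) :=
  topSum_erase_general S x k hx hk
end
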